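/- arXiv:2104.13065 — 4 statements merged into one kernel-verified Lean document; each statement's English description precedes it below -/
import Mathlib

section
/- In any quandle X, if elements v, w satisfy (v ∗ w) ∗ v = w, (w ∗ v) ∗ w = v, and w ∗^{m+1} v = w ∗ v (where ∗^k denotes k-fold right multiplication by v), then (w ∗ v) ∗^m w = w ∗ v. -/
/-- A quandle with right action: `op x y` is `x ∗ y`. -/
structure RightQuandle (X : Type*) where
  op : X → X → X
  idem : ∀ x, op x x = x
  rightBij : ∀ y, Function.Bijective fun x => op x y
  selfDistrib : ∀ x y z, op (op x y) z = op (op x z) (op y z)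

/-- If (v∗w)∗v = w, (w∗v)∗w = v, and w ∗^{m+1} v = w ∗ v, then (w∗v) ∗^m w = w∗v. -/
theorem stmt2 {X : Type*} (Q : RightQuandle X) (v w : X) (m : ℕ)
    (h1 : Q.op (Q.op v w) v = w) (h2 : Q.op (Q.op w v) w = v)
    (h3 : (fun x => Q.op x v)^[m + 1] w = Q.op w v) :
    (fun x => Q.op x w)^[m] (Q.op w v) = Q.op w v := by
  set f : X → X := fun x => Q.op x v with hf
  set g : X → X := fun x => Q.op x w with hg
  have finj : Function.Injective f := (Q.rightBij v).1
  -- pointwise braid relation: g (f (g x)) = f (g (f x))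
  have braid : ∀ x, g (f (g x)) = f (g (f x)) := by
    intro x
    simp only [hf, hg]
    calc Q.op (Q.op (Q.op x w) v) w
        = Q.op (Q.op (Q.op x v) (Q.op w v)) w := by rw [Q.selfDistrib x w v]
      _ = Q.op (Q.op (Q.op x v) w) (Q.op (Q.op w v) w) := by rw [Q.selfDistrib (Q.op x v) (Q.op w v) w]
      _ = Q.op (Q.op (Q.op x v) w) v := by rw [h2]
  have hgw : g w = w := Q.idem w
  -- f^[m] w = w from h3 and injectivity
  have hfm : f^[m] w = w := by
    apply finj
    have := h3
    rw [Function.iterate_succ_apply'] at this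
    simpa using this
  -- key induction
  have key : ∀ k, g^[k] (f w) = f (g (f^[k] w)) := by
    intro k
    induction k with
    | zero => simp [hgw]
    | succ k ih =>
      rw [Function.iterate_succ_apply', ih, braid, ← Function.iterate_succ_apply' f k w]
  have hwv : Q.op w v = f w := rfl
  rw [hwv]
  calc g^[m] (f w) = f (g (f^[m] w)) := key m
    _ = f w := by rw [hfm, hgw]
end

section
/- Let X be a quandle and v, w ∈ X with (v ∗ w) ∗ v = w and (w ∗ v) ∗ w = v. Then for every k ≥ 1, the element v satisfies v ∗ (w ∗^k v) = w ∗^{k−1} v, where w ∗^k v denotes k-fold right multiplication of w by v. -/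
/-- If (v∗w)∗v = w and (w∗v)∗w = v, then for every k ≥ 1,
v ∗ (w ∗^k v) = w ∗^{k-1} v. -/
theorem stmt6 {X : Type*} (Q : RightQuandle X) (v w : X)
    (h1 : Q.op (Q.op v w) v = w) (h2 : Q.op (Q.op w v) w = v) :
    ∀ k : ℕ, 1 ≤ k →
      Q.op v ((fun x => Q.op x v)^[k] w) = (fun x => Q.op x v)^[k - 1] w := by
  intro k hk
  induction k, hk using Nat.le_induction with
  | base =>
    simp only [Function.iterate_one, Nat.sub_self, Function.iterate_zero, id]
    have hd := Q.selfDistrib v w v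
    rw [Q.idem] at hd
    rw [← hd, h1]
  | succ n hn ih =>
    have hd := Q.selfDistrib v ((fun x => Q.op x v)^[n] w) v
    rw [Q.idem] at hd
    rw [Function.iterate_succ_apply', ← hd, ih]
    rw [show n + 1 - 1 = (n - 1) + 1 by omega, Function.iterate_succ_apply']
end

section
/- Consider the quandle Q presented by generators a, c and relations (a ∗ c) ∗ a = c and c ∗^m a = c for m = 2 (i.e., (c ∗ a) ∗ a = c). Then Q is isomorphic to the dihedral quandle of order 3. -/
/-- `Q` with elements `a`, `c` is the quandle presented by generators a, c and
relations (a∗c)∗a = c and c ∗^m a = c, expressed via the universal property. -/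
def IsPresentedTwistSpun {X : Type*} (Q : RightQuandle X) (a c : X) (m : ℕ) : Prop :=
  Q.op (Q.op a c) a = c ∧ (fun x => Q.op x a)^[m] c = c ∧
  ∀ (Y : Type) (R : RightQuandle Y) (a' c' : Y),
    R.op (R.op a' c') a' = c' → (fun x => R.op x a')^[m] c' = c' →
    ∃! f : X → Y,
      (∀ x y, f (Q.op x y) = R.op (f x) (f y)) ∧ f a = a' ∧ f c = c'
/-- The dihedral quandle operation on ZMod 3: x ∗ y = 2y − x. -/
def dihedralOp (x y : ZMod 3) : ZMod 3 := 2 * y - x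

/-- The dihedral quandle of order 3 as a `RightQuandle`. -/
def dihedralQuandle : RightQuandle (ZMod 3) where
  op := dihedralOp
  idem x := by show 2*x - x = x; ring
  rightBij y := by
    have h : Function.Involutive (fun x => dihedralOp x y) := by
      intro x; show 2*y - (2*y - x) = x; ring
    exact h.bijective
  selfDistrib x y z := by simp [dihedralOp]; ring

/-- The quandle presented by ⟨a, c ∣ (a∗c)∗a = c, (c∗a)∗a = c⟩ is isomorphic to
the dihedral quandle of order 3. -/
theorem stmt12 {X : Type} (Q : RightQuandle X) (a c : X)
    (hpres : IsPresentedTwistSpun Q a c 2) :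
    ∃ f : X ≃ ZMod 3, ∀ x y, f (Q.op x y) = dihedralOp (f x) (f y) := by
  obtain ⟨rel1, rel2it, huniv⟩ := hpres
  have rel2 : Q.op (Q.op c a) a = c := by
    simpa [Function.iterate_succ_apply'] using rel2it
  -- Derived identities
  set b := Q.op c a with hb
  -- a∗c = c∗a
  have key2 : Q.op a b = c := by
    have : Q.op (Q.op a c) a = Q.op (Q.op a a) (Q.op c a) := Q.selfDistrib a c a
    rw [Q.idem] at this
    rw [← this, rel1]
  have key1 : Q.op a c = b := by
    have h1 : Q.op (Q.op (Q.op a c) a) a = Q.op c a := by rw [rel1]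
    have h2 : Q.op (Q.op (Q.op a c) a) a = Q.op a c := by
      rw [Q.selfDistrib a c a, Q.idem, Q.selfDistrib a (Q.op c a) a, Q.idem, rel2]
    rw [← h2, h1]
  have key4 : Q.op b c = Q.op c b := by
    have : Q.op (Q.op c a) c = Q.op (Q.op c c) (Q.op a c) := Q.selfDistrib c a c
    rw [Q.idem, key1] at this
    exact this
  have key5 : Q.op (Q.op c b) b = c := by
    have h1 : Q.op (Q.op b a) c = Q.op (Q.op b c) (Q.op a c) := Q.selfDistrib b a c
    rw [rel2, Q.idem, key1, key4] at h1
    exact h1.symm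
  have key6 : Q.op c b = a := by
    have hinj := (Q.rightBij b).1
    apply hinj
    show Q.op (Q.op c b) b = Q.op a b
    rw [key5, key2]
  have key7 : Q.op b c = a := by rw [key4, key6]
  -- dihedral side relations
  have drel1 : dihedralOp (dihedralOp 0 1) 0 = 1 := by decide
  have drel2 : (fun x => dihedralOp x 0)^[2] 1 = 1 := by decide
  obtain ⟨f, ⟨fhom, fa, fc⟩, _⟩ := huniv (ZMod 3) dihedralQuandle 0 1 drel1 drel2
  -- inverse map
  set g : ZMod 3 → X := fun z => if z = 0 then a else if z = 1 then c else b with hg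
  have g0 : g 0 = a := rfl
  have g1 : g 1 = c := by norm_num [hg]
  have g2 : g 2 = b := by simp only [hg, if_neg (show ¬((2:ZMod 3)=0) by decide), if_neg (show ¬((2:ZMod 3)=1) by decide)]
  have ghom : ∀ x y : ZMod 3, g (dihedralOp x y) = Q.op (g x) (g y) := by
    intro x y
    fin_cases x <;> fin_cases y <;>
      simp only [show ∀ u v : ZMod 3, dihedralOp u v = 2*v - u from fun _ _ => rfl] <;>
      norm_num [g0, g1, g2] <;>
      first
        | exact (Q.idem _).symm
        | exact key1.symm
        | exact key2.symm
        | exact hb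
        | exact key6.symm
        | exact rel2.symm
        | exact key7.symm
  -- g ∘ f = id by uniqueness
  obtain ⟨h, hh, hhuniq⟩ := huniv X Q a c rel1 rel2it
  have hid : (fun x : X => x) = h := hhuniq _ ⟨fun _ _ => rfl, rfl, rfl⟩
  have hgf : (fun x => g (f x)) = h := by
    apply hhuniq
    refine ⟨fun x y => ?_, by rw [fa, g0], by rw [fc, g1]⟩
    rw [fhom x y]; exact ghom (f x) (f y)
  have gf : ∀ x, g (f x) = x := fun x => by
    have := hgf.trans hid.symm
    exact congrFun this x
  have fb : f b = 2 := by
    rw [hb, fhom, fa, fc]; decide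
  have fg : ∀ z : ZMod 3, f (g z) = z := by
    intro z
    have hz : ∀ w : ZMod 3, w = 0 ∨ w = 1 ∨ w = 2 := by decide
    rcases hz z with rfl | rfl | rfl <;>
      first
        | rw [g0, fa]
        | rw [g1, fc]
        | rw [g2, fb]
  exact ⟨⟨f, g, gf, fg⟩, fhom⟩
end

section
/- The quandle presented by generators a, c and relations (a ∗ c) ∗ a = c and c ∗^1 a = c (i.e., c ∗ a = c) is the trivial quandle of order 1. -/
/-- The trivial quandle structure on `Bool`. -/
def trivQ : RightQuandle Bool where
  op := fun x _ => x
  idem := fun _ => rfl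
  rightBij := fun _ => Function.bijective_id
  selfDistrib := fun _ _ _ => rfl

/-- The quandle presented by ⟨a, c ∣ (a∗c)∗a = c, c∗a = c⟩ is the trivial quandle
of order 1. -/
theorem stmt13 {X : Type} (Q : RightQuandle X) (a c : X)
    (hpres : IsPresentedTwistSpun Q a c 1) :
    Nat.card X = 1 := by
  classical
  obtain ⟨h1, h2, huniv⟩ := hpres
  simp only [Function.iterate_one] at h2
  -- h2 : Q.op c a = c
  have hinjA := (Q.rightBij a).1
  have hinjC := (Q.rightBij c).1
  have hac : Q.op a c = c := by
    apply hinjA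
    show Q.op (Q.op a c) a = Q.op c a
    rw [h1, h2]
  have haec : a = c := by
    apply hinjC
    show Q.op a c = Q.op c c
    rw [hac, Q.idem]
  subst haec
  -- Step 1: translation by `a` is the identity
  obtain ⟨f, _, hfuniq⟩ := huniv X Q a a (by rw [h1]) (by simpa using h2)
  have h_id : id = f := hfuniq id ⟨fun _ _ => rfl, rfl, rfl⟩
  have h_Ta : (fun x => Q.op x a) = f :=
    hfuniq _ ⟨fun x y => Q.selfDistrib x y a, Q.idem a, Q.idem a⟩
  have hTa : ∀ x, Q.op x a = x := fun x => by
    have := congrFun (h_Ta.trans h_id.symm) x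
    simpa using this
  -- universal property into the trivial quandle on Bool
  obtain ⟨g, _, hguniq⟩ := huniv Bool trivQ true true rfl (by simp [trivQ])
  have hconst : (fun _ : X => true) = g :=
    hguniq _ ⟨fun _ _ => rfl, rfl, rfl⟩
  -- Step 2: every translation is the identity
  have conj : ∀ u x y, Q.op (Q.op u y) (Q.op x y) = Q.op (Q.op u x) y :=
    fun u x y => (Q.selfDistrib u x y).symm
  set f2 : X → Bool := fun b => if ∀ x, Q.op x b = x then true else false with hf2
  have hf2hom : ∀ x y, f2 (Q.op x y) = trivQ.op (f2 x) (f2 y) := by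
    intro x y
    show f2 (Q.op x y) = f2 x
    have hiff : (∀ u, Q.op u (Q.op x y) = u) ↔ (∀ u, Q.op u x = u) := by
      constructor
      · intro h u
        apply (Q.rightBij y).1
        show Q.op (Q.op u x) y = Q.op u y
        rw [← conj u x y, h]
      · intro h w
        obtain ⟨u, hu⟩ := (Q.rightBij y).2 w
        simp only at hu
        rw [← hu, conj u x y, h]
    simp only [hf2, hiff]
  have hf2a : f2 a = true := by simp only [hf2, if_pos hTa]
  have hf2eq : f2 = g := hguniq _ ⟨hf2hom, hf2a, hf2a⟩
  have htriv : ∀ x b, Q.op x b = b → True := fun _ _ _ => trivial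
  have hall : ∀ b x, Q.op x b = x := by
    intro b
    have : f2 b = true := by rw [hf2eq, ← hconst]
    by_contra hb
    push_neg at hb
    simp only [hf2] at this
    rw [if_neg (by push_neg; exact hb)] at this
    exact Bool.false_ne_true this
  -- Step 3: X = {a}
  set f3 : X → Bool := fun x => if x = a then true else false with hf3
  have hf3eq : f3 = g := by
    apply hguniq
    refine ⟨fun x y => ?_, by simp [hf3], by simp [hf3]⟩
    show f3 (Q.op x y) = f3 x
    rw [hall y x]
  have hxa : ∀ x : X, x = a := by
    intro x
    have : f3 x = true := by rw [hf3eq, ← hconst]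
    simpa [hf3] using this
  rw [Nat.card_eq_one_iff_unique]
  exact ⟨⟨fun x y => (hxa x).trans (hxa y).symm⟩, ⟨a⟩⟩
end
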